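/- Let v₁, …, v_m be nonzero vectors of V and, for each i, let π_i : 𝔽₂[V] → 𝔽₂[V/span{v_i}] be the algebra homomorphism induced by the quotient map, and let I_i be the augmentation ideal of 𝔽₂[V/span{v_i}]. Let q ≥ 1 and let c ∈ I^q be such that π_i(c) ∈ I_i^{q+1} for every i = 1, …, m. Then there exists c' ∈ I^q with c − c' ∈ I^{q+1} and π_i(c') = 0 for every i = 1, …, m. (This is the key lifting property establishing the conditions s_{n,q} for the complex A_*(X_Δ(ℝ)) computing the Borel–Moore homology with ℤ/2ℤ coefficients of a real toric variety, where 𝔽₂[V] is the summand A_{σ} for the zero cone and the v_i are the mod-2 reductions of the primitive generators of the rays of the fan Δ.) -/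

import Mathlib

open AddMonoidAlgebra

/-- The canonical basis element `[v]` of the group algebra `𝔽₂[V]` of the additive group `V`. -/
noncomputable def ga {V : Type*} [AddCommMonoid V] (v : V) :
    AddMonoidAlgebra (ZMod 2) V :=
  AddMonoidAlgebra.single v 1

/-- The fundamental class `[H] = ∑_{v ∈ H} [v] ∈ 𝔽₂[V]` of a linear subspace `H ⊆ V`. -/
noncomputable def fundClass {V : Type*} [AddCommGroup V] [Module (ZMod 2) V]
    (H : Submodule (ZMod 2) V) : AddMonoidAlgebra (ZMod 2) V :=
  ∑ᶠ v ∈ (H : Set V), ga v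

/-- The augmentation map `μ : 𝔽₂[V] → 𝔽₂`, sending each `[v]` to `1`. -/
noncomputable def aug (V : Type*) [AddCommMonoid V] :
    AddMonoidAlgebra (ZMod 2) V →ₐ[ZMod 2] ZMod 2 :=
  AddMonoidAlgebra.lift (ZMod 2) (ZMod 2) V 1

/-- The augmentation ideal `I ⊆ 𝔽₂[V]`, i.e. the kernel of the augmentation map. -/
noncomputable def augIdeal (V : Type*) [AddCommMonoid V] :
    Ideal (AddMonoidAlgebra (ZMod 2) V) :=
  RingHom.ker (aug V).toRingHom


/-!
Write `x_v = 1 + [v]`. In characteristic two `x_v² = 0` and `x_(a+b)` divides `x_a x_b`, and the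
kernel of `π_w : 𝔽₂[V] → 𝔽₂[V/w]` is the principal ideal `(x_w)`. Choose among the `v_i` a basis
`w_1, …, w_k` of their span and put `P = x_(w_1) ⋯ x_(w_k)`. Every `v_i` is a sum of some of the
`w_j`, so `x_(v_i)` divides `P` and `π_i(P) = 0`; it therefore suffices to find `e` with
`c ≡ P e mod I^(q+1)`, and to take `c' = P e`.

A linear section of `V → V/w` identifies `𝔽₂[V]` with `𝔽₂[V/w][x_w]/(x_w²)`, and under this
identification `I^(n+1)` becomes `I_w^(n+1) ⊕ x_w I_w^n`. Passing to quotients by one `w_j` at a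
time, this gives `P 𝔽₂[V] ∩ I^n = P I^(n-k)`, and `P 𝔽₂[V] ∩ ker π_w = x_w P 𝔽₂[V]` for `w`
independent of the `w_j`. These two facts turn `c ≡ P e` and `π_w(c) ∈ I_w^(q+1)` into
`c ≡ x_w P e'`, which is the induction step on `k`.
-/

local notation "𝔽₂[" V "]" => AddMonoidAlgebra (ZMod 2) V
local notation "mapD[" f "]" => mapDomainAlgHom (ZMod 2) (ZMod 2) f
local notation "π[" w "]" => mapD[LinearMap.toAddMonoidHom (Submodule.mkQ (ZMod 2 ∙ w))]

section AddCommMonoid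

variable {V W ι : Type*} [AddCommMonoid V] [AddCommMonoid W]

noncomputable def augGen (v : V) : 𝔽₂[V] := 1 + ga v

lemma ga_zero : ga (0 : V) = 1 := rfl

lemma ga_add (v w : V) : ga (v + w) = ga v * ga w := by
  simp [ga, single_mul_single]

lemma augGen_zero : augGen (0 : V) = 0 := by
  rw [augGen, ga_zero, ZModModule.add_self]

lemma aug_ga (v : V) : aug V (ga v) = 1 := by
  simp [aug, ga]

lemma mem_augIdeal {c : 𝔽₂[V]} : c ∈ augIdeal V ↔ aug V c = 0 :=
  RingHom.mem_ker

lemma augGen_mem_augIdeal (v : V) : augGen v ∈ augIdeal V := by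
  rw [mem_augIdeal, augGen, map_add, map_one, aug_ga, ZModModule.add_self]

lemma prod_augGen_mem_augIdeal_pow (w : ι → V) (S : Finset ι) :
    ∏ j ∈ S, augGen (w j) ∈ augIdeal V ^ S.card := by
  simpa using Ideal.prod_mem_prod (I := fun _ => augIdeal V) fun j _ => augGen_mem_augIdeal (w j)

lemma mapDomainAlgHom_ga (f : V →+ W) (v : V) : mapD[f] (ga v) = ga (f v) := by
  simp [ga]

lemma mapDomainAlgHom_augGen (f : V →+ W) (v : V) : mapD[f] (augGen v) = augGen (f v) := by
  rw [augGen, map_add, map_one, mapDomainAlgHom_ga, augGen]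

lemma mapDomainAlgHom_prod_augGen (f : V →+ W) (w : ι → V) (S : Finset ι) :
    mapD[f] (∏ j ∈ S, augGen (w j)) = ∏ j ∈ S, augGen (f (w j)) := by
  simp only [map_prod, mapDomainAlgHom_augGen]

lemma aug_mapDomainAlgHom (f : V →+ W) (c : 𝔽₂[V]) : aug W (mapD[f] c) = aug V c := by
  have : (aug W).comp mapD[f] = aug V := by
    ext v
    simpa [ga] using (aug_ga (f v)).trans (aug_ga v).symm
  exact DFunLike.congr_fun this c

lemma mapDomainAlgHom_mem_augIdeal (f : V →+ W) {c : 𝔽₂[V]} (hc : c ∈ augIdeal V) :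
    mapD[f] c ∈ augIdeal W := by
  rwa [mem_augIdeal, aug_mapDomainAlgHom, ← mem_augIdeal]

lemma map_augIdeal_pow_le (f : V →+ W) (n : ℕ) :
    Ideal.map mapD[f] (augIdeal V ^ n) ≤ augIdeal W ^ n := by
  rw [Ideal.map_pow]
  exact Ideal.pow_right_mono
    (Ideal.map_le_iff_le_comap.mpr fun _ => mapDomainAlgHom_mem_augIdeal f) n

lemma mapDomainAlgHom_mem_augIdeal_pow (f : V →+ W) {n : ℕ} {c : 𝔽₂[V]}
    (hc : c ∈ augIdeal V ^ n) : mapD[f] c ∈ augIdeal W ^ n :=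
  map_augIdeal_pow_le f n (Ideal.mem_map_of_mem _ hc)

lemma mapDomainAlgHom_surjective {f : V →+ W} (hf : Function.Surjective f) :
    Function.Surjective mapD[f] := fun y =>
  let ⟨g, hg⟩ := Finsupp.mapDomain_surjective hf y.coeff
  ⟨ofCoeff g, coeff_injective hg⟩

lemma map_augIdeal_pow {f : V →+ W} (hf : Function.Surjective f) (n : ℕ) :
    Ideal.map mapD[f] (augIdeal V ^ n) = augIdeal W ^ n := by
  refine (map_augIdeal_pow_le f n).antisymm ?_
  rw [Ideal.map_pow]
  refine Ideal.pow_right_mono (fun y hy => ?_) n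
  obtain ⟨c, rfl⟩ := mapDomainAlgHom_surjective hf y
  rw [mem_augIdeal, aug_mapDomainAlgHom, ← mem_augIdeal] at hy
  exact Ideal.mem_map_of_mem _ hy

lemma exists_mapDomainAlgHom_eq_of_mem_augIdeal_pow {f : V →+ W} (hf : Function.Surjective f)
    {n : ℕ} {y : 𝔽₂[W]} (hy : y ∈ augIdeal W ^ n) : ∃ c ∈ augIdeal V ^ n, mapD[f] c = y := by
  rwa [← map_augIdeal_pow hf, Ideal.mem_map_iff_of_surjective _ (mapDomainAlgHom_surjective hf)]
    at hy

end AddCommMonoid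

lemma ZModModule.smul_eq_zero_or_eq_self {M : Type*} [AddCommGroup M] [Module (ZMod 2) M]
    (a : ZMod 2) (x : M) : a • x = 0 ∨ a • x = x := by
  obtain rfl | rfl : a = 0 ∨ a = 1 := by revert a; decide
  exacts [.inl (zero_smul _ x), .inr (one_smul _ x)]

lemma Submodule.mkQ_span_singleton_self {R M : Type*} [Ring R] [AddCommGroup M] [Module R M]
    (x : M) : (R ∙ x).mkQ x = 0 :=
  (Submodule.Quotient.mk_eq_zero _).mpr (Submodule.mem_span_singleton_self x)

lemma Submodule.exists_section_mkQ_of_disjoint {K E : Type*} [DivisionRing K] [AddCommGroup E]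
    [Module K E] {p W : Submodule K E} (h : Disjoint p W) :
    ∃ s : (E ⧸ p) →ₗ[K] E, (∀ z, p.mkQ (s z) = z) ∧ ∀ u ∈ W, s (p.mkQ u) = u := by
  obtain ⟨U, hWU, hU⟩ := h.symm.exists_isCompl
  refine ⟨U.subtype ∘ₗ (p.quotientEquivOfIsCompl U hU.symm).toLinearMap, fun z => ?_,
    fun u hu => ?_⟩
  · exact p.mk_quotientEquivOfIsCompl_apply hU.symm z
  · exact congrArg Subtype.val (p.quotientEquivOfIsCompl_apply_mk_right hU.symm ⟨u, hWU hu⟩)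

lemma LinearIndepOn.mkQ_span_singleton_of_insert {K E ι : Type*} [DivisionRing K]
    [AddCommGroup E] [Module K E] {w : ι → E} {a : ι} {S : Set ι} (ha : a ∉ S)
    (hw : LinearIndepOn K w (insert a S)) :
    LinearIndepOn K (fun j => (K ∙ w a).mkQ (w j)) S := by
  obtain ⟨hS, hwa⟩ := (linearIndepOn_insert ha).mp hw
  refine hS.map (f := (K ∙ w a).mkQ) ?_
  rw [Submodule.ker_mkQ, ← Set.image_eq_range]
  exact Submodule.disjoint_span_singleton_of_notMem hwa

section CharTwo

variable {V : Type*} [AddCommGroup V] [Module (ZMod 2) V] {w : V}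

lemma augGen_mul_self (v : V) : augGen v * augGen v = 0 := by
  have h : ga v * ga v = 1 := by rw [← ga_add, ZModModule.add_self, ga_zero]
  calc augGen v * augGen v = (1 + ga v * ga v) + (ga v + ga v) := by rw [augGen]; ring
    _ = 0 := by rw [h, ZModModule.add_self, ZModModule.add_self, add_zero]

lemma augGen_add_dvd_mul (a b : V) : augGen (a + b) ∣ augGen a * augGen b := by
  have h : ga (a + b) * ga a = ga b := by
    rw [← ga_add, add_right_comm, ZModModule.add_self, zero_add]
  refine ⟨augGen a, ?_⟩
  simp only [augGen]
  linear_combination -h - ga_add a b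

lemma coeff_augGen_mul (c : 𝔽₂[V]) (u : V) :
    (augGen w * c).coeff u = c.coeff u + c.coeff (w + u) := by
  rw [augGen, add_mul, one_mul, coeff_add, Finsupp.add_apply, ga, coeff_single_mul_apply,
    one_mul, ZModModule.neg_eq_self]

lemma augGen_dvd_ga_sub_ga {u u' : V} (h : u - u' ∈ ZMod 2 ∙ w) : augGen w ∣ ga u - ga u' := by
  obtain ⟨a, ha⟩ := Submodule.mem_span_singleton.mp h
  rcases ZModModule.smul_eq_zero_or_eq_self a w with h₀ | h₁
  · rw [h₀, eq_comm, sub_eq_zero] at ha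
    rw [ha, sub_self]
    exact dvd_zero _
  · rw [h₁] at ha
    refine ⟨ga u', ?_⟩
    rw [show u = u' + w by rw [ha, add_sub_cancel], ga_add, augGen, ZModModule.sub_eq_add]
    ring

lemma mapDomainAlgHom_mkQ_augGen_self : π[w] (augGen w) = 0 := by
  rw [mapDomainAlgHom_augGen, LinearMap.toAddMonoidHom_coe, Submodule.mkQ_span_singleton_self,
    augGen_zero]

lemma mapDomainAlgHom_mkQ_prod_augGen {ι : Type*} (u : ι → V) (S : Finset ι) :
    π[w] (∏ j ∈ S, augGen (u j)) = ∏ j ∈ S, augGen ((ZMod 2 ∙ w).mkQ (u j)) := by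
  rw [mapDomainAlgHom_prod_augGen, LinearMap.toAddMonoidHom_coe]

section Section

variable {s : (V ⧸ ZMod 2 ∙ w) →ₗ[ZMod 2] V} (hs : ∀ z, (ZMod 2 ∙ w).mkQ (s z) = z)
include hs

local notation "σ" => mapD[LinearMap.toAddMonoidHom s]

lemma mapDomainAlgHom_mkQ_section (z : 𝔽₂[V ⧸ ZMod 2 ∙ w]) : π[w] (σ z) = z := by
  have : π[w].comp σ = AlgHom.id _ _ := by
    ext u
    simp [hs]
  exact DFunLike.congr_fun this z

lemma augGen_dvd_sub_section_mkQ (c : 𝔽₂[V]) : augGen w ∣ c - σ (π[w] c) := by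
  induction c using AddMonoidAlgebra.induction_linear with
  | zero => simp
  | add c₁ c₂ h₁ h₂ => simpa only [map_add, add_sub_add_comm] using dvd_add h₁ h₂
  | single u r =>
    obtain ⟨d, hd⟩ :=
      augGen_dvd_ga_sub_ga ((Submodule.Quotient.eq _).mp (hs (Submodule.mkQ _ u)).symm)
    refine ⟨r • d, ?_⟩
    simp only [mapDomainAlgHom_apply, mapDomain_single]
    rw [mul_smul_comm, ← hd]
    simp [ga, smul_sub]

lemma exists_eq_section_mkQ_add_augGen_mul_section (c : 𝔽₂[V]) :
    ∃ t, c = σ (π[w] c) + augGen w * σ t := by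
  obtain ⟨d, hd⟩ := augGen_dvd_sub_section_mkQ hs c
  obtain ⟨d', hd'⟩ := augGen_dvd_sub_section_mkQ hs d
  exact ⟨π[w] d, by linear_combination hd + augGen w * hd' + d' * augGen_mul_self w⟩

/-- The coefficients of `σ z` live on the range of `s`, a subspace not containing `w`, so those of
`x_w σ z = σ z + [w] σ z` are those of `σ z` and of its translate by `w`, with disjoint supports. -/
lemma eq_zero_of_augGen_mul_section_eq_zero (hw : w ≠ 0) {z : 𝔽₂[V ⧸ ZMod 2 ∙ w]}
    (h : augGen w * σ z = 0) : z = 0 := by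
  classical
  have hsupp : ∀ u ∈ (σ z).coeff.support, u ∈ Set.range s := fun u hu => by
    obtain ⟨a, -, rfl⟩ := Finset.mem_image.mp (Finsupp.mapDomain_support hu)
    exact ⟨a, rfl⟩
  suffices σ z = 0 by rw [← mapDomainAlgHom_mkQ_section hs z, this, map_zero]
  by_contra hne
  obtain ⟨u, hu⟩ : (σ z).coeff.support.Nonempty := by
    rwa [Finsupp.support_nonempty_iff, Ne, coeff_eq_zero]
  have hwu : w + u ∈ (σ z).coeff.support := by
    have hsum := coeff_augGen_mul (w := w) (σ z) u
    rw [h, coeff_zero, Finsupp.zero_apply, eq_comm, add_eq_zero_iff_eq_neg,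
      ZModModule.neg_eq_self] at hsum
    rwa [Finsupp.mem_support_iff, ← hsum, ← Finsupp.mem_support_iff]
  obtain ⟨a, rfl⟩ := hsupp u hu
  obtain ⟨b, hb⟩ := hsupp _ hwu
  have hba : b - a = 0 := by
    rw [← hs (b - a), map_sub, hb, add_sub_cancel_right, Submodule.mkQ_span_singleton_self]
  exact hw (by rw [← add_sub_cancel_right w (s a), ← hb, ← map_sub, hba, map_zero])

/-- The filtration half of `𝔽₂[V] ≅ 𝔽₂[V/w][x_w]/(x_w²)`. -/
lemma exists_eq_section_mkQ_add_augGen_mul_section_of_mem_pow {n : ℕ} {c : 𝔽₂[V]}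
    (hc : c ∈ augIdeal V ^ (n + 1)) :
    ∃ t ∈ augIdeal (V ⧸ ZMod 2 ∙ w) ^ n, c = σ (π[w] c) + augGen w * σ t := by
  induction n generalizing c with
  | zero =>
    obtain ⟨t, ht⟩ := exists_eq_section_mkQ_add_augGen_mul_section hs c
    exact ⟨t, by simp, ht⟩
  | succ n ih =>
    rw [pow_succ] at hc
    refine Submodule.mul_induction_on hc (fun a ha b hb => ?_) fun x y hx hy => ?_
    · obtain ⟨t, ht, hat⟩ := ih ha
      obtain ⟨t', hbt'⟩ := exists_eq_section_mkQ_add_augGen_mul_section hs b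
      refine ⟨π[w] a * t' + t * π[w] b, Ideal.add_mem _ ?_ ?_, ?_⟩
      · exact Ideal.mul_mem_right _ _ (mapDomainAlgHom_mem_augIdeal_pow _ ha)
      · rw [pow_succ]
        exact Ideal.mul_mem_mul ht (mapDomainAlgHom_mem_augIdeal _ hb)
      · simp only [map_mul, map_add]
        linear_combination b * hat + (σ (π[w] a) + augGen w * σ t) * hbt' +
          σ t * σ t' * augGen_mul_self w
    · obtain ⟨t₁, ht₁, hx⟩ := hx
      obtain ⟨t₂, ht₂, hy⟩ := hy
      refine ⟨t₁ + t₂, Ideal.add_mem _ ht₁ ht₂, ?_⟩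
      rw [map_add, map_add, map_add]
      linear_combination hx + hy

lemma augGen_mul_section_dvd_of_mapDomainAlgHom_mkQ_eq_zero {z : 𝔽₂[V ⧸ ZMod 2 ∙ w]}
    {y : 𝔽₂[V]} (h : π[w] (σ z * y) = 0) : augGen w * σ z ∣ σ z * y := by
  obtain ⟨t, ht⟩ := exists_eq_section_mkQ_add_augGen_mul_section hs y
  rw [map_mul, mapDomainAlgHom_mkQ_section hs] at h
  have h' : σ z * σ (π[w] y) = 0 := by rw [← map_mul, h, map_zero]
  exact ⟨σ t, by linear_combination σ z * ht + h'⟩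

end Section

lemma mapDomainAlgHom_mkQ_eq_zero_iff {c : 𝔽₂[V]} : π[w] c = 0 ↔ augGen w ∣ c := by
  refine ⟨fun h => ?_, fun ⟨d, hd⟩ => by
    rw [hd, map_mul, mapDomainAlgHom_mkQ_augGen_self, zero_mul]⟩
  obtain ⟨s, hs, -⟩ := Submodule.exists_section_mkQ_of_disjoint (p := ZMod 2 ∙ w) disjoint_bot_right
  simpa [h] using augGen_dvd_sub_section_mkQ hs c

lemma augGen_mul_eq_of_mapDomainAlgHom_mkQ_eq {y y' : 𝔽₂[V]} (h : π[w] y = π[w] y') :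
    augGen w * y = augGen w * y' := by
  obtain ⟨d, hd⟩ := (mapDomainAlgHom_mkQ_eq_zero_iff (c := y - y')).mp
    (by rw [map_sub, h, sub_self])
  linear_combination augGen w * hd + d * augGen_mul_self w

lemma mapDomainAlgHom_mkQ_mem_augIdeal_pow_of_augGen_mul_mem (hw : w ≠ 0) {n : ℕ} {d : 𝔽₂[V]}
    (h : augGen w * d ∈ augIdeal V ^ n) : π[w] d ∈ augIdeal (V ⧸ ZMod 2 ∙ w) ^ (n - 1) := by
  obtain ⟨s, hs, -⟩ := Submodule.exists_section_mkQ_of_disjoint (p := ZMod 2 ∙ w) disjoint_bot_right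
  cases n with
  | zero => simp
  | succ n =>
    obtain ⟨t, ht, hdt⟩ := exists_eq_section_mkQ_add_augGen_mul_section_of_mem_pow hs h
    rw [map_mul, mapDomainAlgHom_mkQ_augGen_self, zero_mul, map_zero, zero_add,
      augGen_mul_eq_of_mapDomainAlgHom_mkQ_eq (mapDomainAlgHom_mkQ_section hs (π[w] d)).symm,
      ← sub_eq_zero, ← mul_sub, ← map_sub] at hdt
    rwa [Nat.add_sub_cancel, sub_eq_zero.mp (eq_zero_of_augGen_mul_section_eq_zero hs hw hdt)]

end CharTwo

section Products

variable {ι V : Type*} [AddCommGroup V] [Module (ZMod 2) V] {w : ι → V}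

lemma augGen_mul_prod_dvd_of_mapDomainAlgHom_mkQ_eq_zero {a : ι} {S : Finset ι} (ha : a ∉ S)
    (hw : LinearIndepOn (ZMod 2) w (insert a ↑S)) {y : 𝔽₂[V]}
    (h : π[w a] ((∏ j ∈ S, augGen (w j)) * y) = 0) :
    augGen (w a) * ∏ j ∈ S, augGen (w j) ∣ (∏ j ∈ S, augGen (w j)) * y := by
  have hwa := ((linearIndepOn_insert ha).mp hw).2
  obtain ⟨s, hs, hsW⟩ := Submodule.exists_section_mkQ_of_disjoint
    (Submodule.disjoint_span_singleton_of_notMem hwa).symm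
  have hP : ∏ j ∈ S, augGen (w j) =
      mapD[s.toAddMonoidHom] (∏ j ∈ S, augGen ((ZMod 2 ∙ w a).mkQ (w j))) := by
    rw [mapDomainAlgHom_prod_augGen]
    refine Finset.prod_congr rfl fun j hj => ?_
    rw [LinearMap.toAddMonoidHom_coe, hsW _ (Submodule.subset_span ⟨j, hj, rfl⟩)]
  rw [hP] at h ⊢
  exact augGen_mul_section_dvd_of_mapDomainAlgHom_mkQ_eq_zero hs h

theorem exists_prod_augGen_mul_eq_of_mem_augIdeal_pow {S : Finset ι}
    (hw : LinearIndepOn (ZMod 2) w S) {n : ℕ} {y : 𝔽₂[V]}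
    (h : (∏ j ∈ S, augGen (w j)) * y ∈ augIdeal V ^ n) :
    ∃ b ∈ augIdeal V ^ (n - S.card),
      (∏ j ∈ S, augGen (w j)) * y = (∏ j ∈ S, augGen (w j)) * b := by
  classical
  induction S using Finset.induction_on generalizing V n y with
  | empty => exact ⟨y, by simpa using h, rfl⟩
  | insert a S ha ih =>
    rw [Finset.coe_insert] at hw
    rw [Finset.prod_insert ha, mul_assoc] at h
    rw [Finset.prod_insert ha]
    have h₁ := mapDomainAlgHom_mkQ_mem_augIdeal_pow_of_augGen_mul_mem
      (hw.ne_zero (Set.mem_insert a _)) h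
    rw [map_mul, mapDomainAlgHom_mkQ_prod_augGen] at h₁
    obtain ⟨b', hb', hyb'⟩ := ih (hw.mkQ_span_singleton_of_insert ha) h₁
    obtain ⟨b, hb, rfl⟩ := exists_mapDomainAlgHom_eq_of_mem_augIdeal_pow
      (f := LinearMap.toAddMonoidHom (Submodule.mkQ _)) (Submodule.mkQ_surjective _) hb'
    refine ⟨b, by rwa [Finset.card_insert_of_notMem ha, add_comm, ← Nat.sub_sub], ?_⟩
    have hPy : augGen (w a) * ((∏ j ∈ S, augGen (w j)) * y) =
        augGen (w a) * ((∏ j ∈ S, augGen (w j)) * b) := by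
      refine augGen_mul_eq_of_mapDomainAlgHom_mkQ_eq ?_
      rw [map_mul, map_mul, mapDomainAlgHom_mkQ_prod_augGen]
      exact hyb'
    linear_combination hPy

theorem exists_sub_prod_augGen_mul_mem_augIdeal_pow {S : Finset ι}
    (hw : LinearIndepOn (ZMod 2) w S) {n : ℕ} {c : 𝔽₂[V]}
    (hc : ∀ j ∈ S, π[w j] c ∈ augIdeal (V ⧸ ZMod 2 ∙ w j) ^ n) :
    ∃ e, c - (∏ j ∈ S, augGen (w j)) * e ∈ augIdeal V ^ n := by
  classical
  induction S using Finset.induction_on with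
  | empty => exact ⟨c, by simp⟩
  | insert a S ha ih =>
    rw [Finset.coe_insert] at hw
    obtain ⟨e, he⟩ := ih ((linearIndepOn_insert ha).mp hw).1
      fun j hj => hc j (Finset.mem_insert_of_mem hj)
    have hPe : π[w a] ((∏ j ∈ S, augGen (w j)) * e) ∈ augIdeal (V ⧸ ZMod 2 ∙ w a) ^ n := by
      have := Ideal.sub_mem _ (hc a (Finset.mem_insert_self a S))
        (mapDomainAlgHom_mem_augIdeal_pow (LinearMap.toAddMonoidHom (Submodule.mkQ _)) he)
      rwa [← map_sub, sub_sub_cancel] at this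
    rw [map_mul, mapDomainAlgHom_mkQ_prod_augGen] at hPe
    obtain ⟨b', hb', heb'⟩ :=
      exists_prod_augGen_mul_eq_of_mem_augIdeal_pow (hw.mkQ_span_singleton_of_insert ha) hPe
    obtain ⟨b, hb, rfl⟩ := exists_mapDomainAlgHom_eq_of_mem_augIdeal_pow
      (f := LinearMap.toAddMonoidHom (Submodule.mkQ _)) (Submodule.mkQ_surjective _) hb'
    obtain ⟨t, ht⟩ := augGen_mul_prod_dvd_of_mapDomainAlgHom_mkQ_eq_zero ha hw (y := e - b)
      (by rw [map_mul, map_sub, mapDomainAlgHom_mkQ_prod_augGen, mul_sub, heb', sub_self])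
    refine ⟨t, ?_⟩
    have hPb : (∏ j ∈ S, augGen (w j)) * b ∈ augIdeal V ^ n := by
      refine Ideal.pow_le_pow_right (le_add_tsub (b := S.card)) ?_
      rw [pow_add]
      exact Ideal.mul_mem_mul (prod_augGen_mem_augIdeal_pow w S) hb
    rw [Finset.prod_insert ha,
      show c - augGen (w a) * (∏ j ∈ S, augGen (w j)) * t =
        (c - (∏ j ∈ S, augGen (w j)) * e) + (∏ j ∈ S, augGen (w j)) * b by
      linear_combination ht]
    exact Ideal.add_mem _ he hPb

lemma augGen_dvd_prod_of_mem_span {S : Finset ι} {u : V}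
    (hu : u ∈ Submodule.span (ZMod 2) (w '' S)) (hu₀ : u ≠ 0) :
    augGen u ∣ ∏ j ∈ S, augGen (w j) := by
  classical
  induction S using Finset.induction_on generalizing u with
  | empty => simp_all
  | insert a S ha ih =>
    rw [Finset.coe_insert, Set.image_insert_eq, Submodule.mem_span_insert] at hu
    obtain ⟨r, z, hz, rfl⟩ := hu
    rw [Finset.prod_insert ha]
    rcases ZModModule.smul_eq_zero_or_eq_self r (w a) with h | h <;> rw [h] at hu₀ ⊢
    · rw [zero_add] at hu₀ ⊢
      exact dvd_mul_of_dvd_right (ih hz hu₀) _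
    · by_cases hz₀ : z = 0
      · rw [hz₀, add_zero]
        exact dvd_mul_right _ _
      · exact (augGen_add_dvd_mul (w a) z).trans (mul_dvd_mul_left _ (ih hz hz₀))

end Products

theorem lifting_snq_general {V : Type*} [AddCommGroup V] [Module (ZMod 2) V]
    (m : ℕ) (v : Fin m → V) (hv : ∀ i, v i ≠ 0)
    (q : ℕ) (c : AddMonoidAlgebra (ZMod 2) V) (hc : c ∈ augIdeal V ^ q)
    (hπ : ∀ i : Fin m,
      AddMonoidAlgebra.mapDomainAlgHom (ZMod 2) (ZMod 2)
          (Submodule.span (ZMod 2) {v i}).mkQ.toAddMonoidHom c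
        ∈ augIdeal (V ⧸ Submodule.span (ZMod 2) {v i}) ^ (q + 1)) :
    ∃ c' ∈ augIdeal V ^ q,
      c - c' ∈ augIdeal V ^ (q + 1) ∧
      ∀ i : Fin m,
        AddMonoidAlgebra.mapDomainAlgHom (ZMod 2) (ZMod 2)
          (Submodule.span (ZMod 2) {v i}).mkQ.toAddMonoidHom c' = 0 := by
  obtain ⟨B, -, -, hspan, hB⟩ :=
    exists_linearIndepOn_extension (linearIndepOn_empty (ZMod 2) v) (Set.empty_subset Set.univ)
  set S := (Set.toFinite B).toFinset
  obtain ⟨e, he⟩ := exists_sub_prod_augGen_mul_mem_augIdeal_pow (S := S) (by simpa [S] using hB)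
    fun j _ => hπ j
  refine ⟨(∏ j ∈ S, augGen (v j)) * e, ?_, he, fun i => ?_⟩
  · simpa using Ideal.sub_mem _ hc (Ideal.pow_le_pow_right q.le_succ he)
  · obtain ⟨d, hd⟩ := augGen_dvd_prod_of_mem_span (S := S)
      (by simpa [S] using hspan ⟨i, trivial, rfl⟩) (hv i)
    rw [map_mul, hd, map_mul, mapDomainAlgHom_mkQ_augGen_self, zero_mul, zero_mul]

/-- let `v₁, …, v_m` be nonzero vectors of `V`, let
`π_i : 𝔽₂[V] → 𝔽₂[V/span{vᵢ}]` be the algebra homomorphisms induced by the quotient maps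
and `I_i` the augmentation ideals of the `𝔽₂[V/span{vᵢ}]`.  If `q ≥ 1` and `c ∈ I^q`
satisfies `π_i(c) ∈ I_i^{q+1}` for all `i`, then there is `c' ∈ I^q` with
`c − c' ∈ I^{q+1}` and `π_i(c') = 0` for all `i`. -/
theorem lifting_snq {V : Type*} [AddCommGroup V] [Module (ZMod 2) V]
    [Module.Finite (ZMod 2) V] (m : ℕ) (v : Fin m → V) (hv : ∀ i, v i ≠ 0)
    (q : ℕ) (hq : 1 ≤ q) (c : AddMonoidAlgebra (ZMod 2) V) (hc : c ∈ augIdeal V ^ q)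
    (hπ : ∀ i : Fin m,
      AddMonoidAlgebra.mapDomainAlgHom (ZMod 2) (ZMod 2)
          (Submodule.span (ZMod 2) {v i}).mkQ.toAddMonoidHom c
        ∈ augIdeal (V ⧸ Submodule.span (ZMod 2) {v i}) ^ (q + 1)) :
    ∃ c' ∈ augIdeal V ^ q,
      c - c' ∈ augIdeal V ^ (q + 1) ∧
      ∀ i : Fin m,
        AddMonoidAlgebra.mapDomainAlgHom (ZMod 2) (ZMod 2)
          (Submodule.span (ZMod 2) {v i}).mkQ.toAddMonoidHom c' = 0 :=
  lifting_snq_general m v hv q c hc hπ
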